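/- Let ε > 0, let x_1 < ... < x_N and y_1 < ... < y_N be strictly increasing real tuples with dividing index ζ, and let K_U = [k̂_{ij}] be the upper block of the kernel matrix. Then for all indices 1 ≤ i_1 ≤ i_2 ≤ N and all ζ(i_2) < j ≤ N, the entries satisfy k̂_{i_1 j} = exp(-(x_{i_2} - x_{i_1})/ε) · k̂_{i_2 j}; in particular the ratio k̂_{i_1 j} / k̂_{i_2 j} does not depend on j. -/

import Mathlib

/-!
For a node index `j`, the condition `ζ i < j` says exactly that `x i < y j`. So `ζ i₂ < j`
and `x i₁ ≤ x i₂` give `ζ i₁ < j` as well; both entries are then unmasked with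
`|x i - y j| = y j - x i`, and their quotient is `exp (-(x i₂ - x i₁) / ε)`.
-/

open Set

/-- The paper's `ζ(i) = k` for the point `a = x_i`. -/
def IsDividingIndex (N : ℕ) (y : ℕ → ℝ) (a : ℝ) (k : ℕ) : Prop :=
  (a < y 1 → k = 0) ∧ (y N ≤ a → k = N) ∧
    (y 1 ≤ a → a < y N → (1 ≤ k ∧ k + 1 ≤ N) ∧ y k ≤ a ∧ a < y (k + 1))

lemma strictMonoOn_Icc_of_forall_lt {α : Type*} [Preorder α] {f : ℕ → α} {m n : ℕ}
    (h : ∀ i j, m ≤ i → i < j → j ≤ n → f i < f j) : StrictMonoOn f (Icc m n) :=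
  fun i hi j hj hij => h i j hi.1 hij hj.2

lemma IsDividingIndex.lt_iff {N : ℕ} {y : ℕ → ℝ} {a : ℝ} {k j : ℕ}
    (hy : StrictMonoOn y (Icc 1 N)) (hk : IsDividingIndex N y a k) (hj1 : 1 ≤ j) (hjN : j ≤ N) :
    k < j ↔ a < y j := by
  have hj : j ∈ Icc 1 N := ⟨hj1, hjN⟩
  obtain ⟨hleft, hright, hmid⟩ := hk
  by_cases ha1 : a < y 1
  · rw [hleft ha1]
    exact ⟨fun _ => ha1.trans_le (hy.monotoneOn ⟨le_rfl, hj1.trans hjN⟩ hj hj1),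
      fun _ => hj1⟩
  by_cases haN : y N ≤ a
  · rw [hright haN]
    exact ⟨fun h => absurd hjN h.not_ge,
      fun h => absurd (haN.trans_lt h) (hy.monotoneOn hj ⟨hj1.trans hjN, le_rfl⟩ hjN).not_gt⟩
  obtain ⟨⟨hk1, hkN⟩, hyk, hyk1⟩ := hmid (not_lt.1 ha1) (not_le.1 haN)
  constructor
  · intro hkj
    exact hyk1.trans_le (hy.monotoneOn ⟨Nat.le_add_left 1 k, hkN⟩ hj hkj)
  · intro haj
    exact (hy.lt_iff_lt ⟨hk1, by omega⟩ hj).1 (hyk.trans_lt haj)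

lemma exp_neg_abs_sub_div_eq_mul {a b c ε : ℝ} (ha : a < c) (hb : b < c) :
    Real.exp (-|a - c| / ε) = Real.exp (-(b - a) / ε) * Real.exp (-|b - c| / ε) := by
  rw [abs_of_neg (sub_neg.2 ha), abs_of_neg (sub_neg.2 hb), ← Real.exp_add]
  congr 1
  ring

theorem upper_block_quasi_collinear_general
    (N : ℕ) (ε : ℝ) (x y : ℕ → ℝ)
    (hx : ∀ i j, 1 ≤ i → i < j → j ≤ N → x i < x j)
    (hy : ∀ i j, 1 ≤ i → i < j → j ≤ N → y i < y j)
    (ζ : ℕ → ℕ)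
    (hζ : ∀ i, 1 ≤ i → i ≤ N →
      (x i < y 1 → ζ i = 0) ∧
      (y N ≤ x i → ζ i = N) ∧
      (y 1 ≤ x i → x i < y N →
        (1 ≤ ζ i ∧ ζ i + 1 ≤ N) ∧ y (ζ i) ≤ x i ∧ x i < y (ζ i + 1)))
    (KU : ℕ → ℕ → ℝ)
    (hKU : ∀ i j, KU i j = if j ≤ ζ i then 0 else Real.exp (-|x i - y j| / ε)) :
    ∀ i₁ i₂ j, 1 ≤ i₁ → i₁ ≤ i₂ → i₂ ≤ N → ζ i₂ < j → j ≤ N →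
      KU i₁ j = Real.exp (-(x i₂ - x i₁) / ε) * KU i₂ j := by
  intro i₁ i₂ j hi₁ hi₁₂ hi₂N hζj hjN
  have hy' := strictMonoOn_Icc_of_forall_lt hy
  have hj1 : 1 ≤ j := Nat.one_le_iff_ne_zero.2 (Nat.ne_zero_of_lt hζj)
  have beyond_iff : ∀ i, 1 ≤ i → i ≤ N → (ζ i < j ↔ x i < y j) := fun i hi1 hiN =>
    IsDividingIndex.lt_iff hy' (hζ i hi1 hiN) hj1 hjN
  have hxj₂ : x i₂ < y j := (beyond_iff i₂ (hi₁.trans hi₁₂) hi₂N).1 hζj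
  have hxj₁ : x i₁ < y j :=
    ((strictMonoOn_Icc_of_forall_lt hx).monotoneOn ⟨hi₁, hi₁₂.trans hi₂N⟩
      ⟨hi₁.trans hi₁₂, hi₂N⟩ hi₁₂).trans_lt hxj₂
  have hζj₁ : ζ i₁ < j := (beyond_iff i₁ hi₁ (hi₁₂.trans hi₂N)).2 hxj₁
  rw [hKU, hKU, if_neg hζj₁.not_ge, if_neg hζj.not_ge]
  exact exp_neg_abs_sub_div_eq_mul hxj₁ hxj₂

/-- Quasi-collinearity of the upper block `K_U` of the kernel
matrix (1-based indexing): for `1 ≤ i₁ ≤ i₂ ≤ N` and `ζ i₂ < j ≤ N`, the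
entries satisfy `KU i₁ j = exp(-(x i₂ - x i₁)/ε) * KU i₂ j`, a ratio
independent of `j`. -/
theorem upper_block_quasi_collinear
    (N : ℕ) (ε : ℝ) (hε : 0 < ε) (x y : ℕ → ℝ)
    (hx : ∀ i j, 1 ≤ i → i < j → j ≤ N → x i < x j)
    (hy : ∀ i j, 1 ≤ i → i < j → j ≤ N → y i < y j)
    (ζ : ℕ → ℕ)
    (hζ : ∀ i, 1 ≤ i → i ≤ N →
      (x i < y 1 → ζ i = 0) ∧
      (y N ≤ x i → ζ i = N) ∧
      (y 1 ≤ x i → x i < y N →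
        (1 ≤ ζ i ∧ ζ i + 1 ≤ N) ∧ y (ζ i) ≤ x i ∧ x i < y (ζ i + 1)))
    (KU : ℕ → ℕ → ℝ)
    (hKU : ∀ i j, KU i j = if j ≤ ζ i then 0 else Real.exp (-|x i - y j| / ε)) :
    ∀ i₁ i₂ j, 1 ≤ i₁ → i₁ ≤ i₂ → i₂ ≤ N → ζ i₂ < j → j ≤ N →
      KU i₁ j = Real.exp (-(x i₂ - x i₁) / ε) * KU i₂ j :=
  upper_block_quasi_collinear_general N ε x y hx hy ζ hζ KU hKU
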